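/- arXiv:2208.05478 — 5 statements merged into one kernel-verified Lean document; each statement's English description precedes it below -/
import Mathlib

section
/- Let G be a group, let A be a sub-ℂ[G]-bimodule of the convolution bimodule of functions G → ℂ such that every element of A is a bounded function (A ⊆ ℓ^∞(G)), let N be a norm on A, and suppose there is a constant C > 0 such that sup_{u∈G} |a(u)| ≤ C·N(a) for all a ∈ A (the norm N is subordinate to the supremum norm). If d : ℂ[G] → A is a derivation which is bounded from the supremum norm to N, i.e. there exists M such that N(d x) ≤ M·‖x‖_s for all x ∈ ℂ[G], then d is quasi-inner: (d δ_t)(g·t) = 0 for all g, t ∈ G with g·t = t·g. -/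
/-- Left action of the group ring `ℂ[G]` on functions `G → ℂ` by convolution. -/
noncomputable def convL (G : Type*) [Group G] (x : MonoidAlgebra ℂ G) (f : G → ℂ) : G → ℂ :=
  fun u => ∑ g ∈ x.coeff.support, x.coeff g * f (g⁻¹ * u)

/-- Right action of the group ring `ℂ[G]` on functions `G → ℂ` by convolution. -/
noncomputable def convR (G : Type*) [Group G] (f : G → ℂ) (x : MonoidAlgebra ℂ G) : G → ℂ :=
  fun u => ∑ g ∈ x.coeff.support, f (u * g⁻¹) * x.coeff g

/-- The supremum norm on the group ring `ℂ[G]`. -/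
noncomputable def supNorm {G : Type*} [Group G] (x : MonoidAlgebra ℂ G) : ℝ :=
  ⨆ g, ‖x.coeff g‖

/-!
Leibniz' rule applied to `δ_{t^{n+1}} = δ_{t^n} δ_t`, evaluated at `g t^{n+1}` with `g` commuting
with `t`, gives `(d δ_{t^n})(g t^n) = n (d δ_t)(g t)` by induction on `n`. Since
`‖δ_{t^n}‖_s = 1`, boundedness of `d` and subordination of `N` bound the left-hand side by `C M`
uniformly in `n`, which forces `(d δ_t)(g t) = 0`.
-/

open MonoidAlgebra

section Convolution

variable {G : Type*} [Group G]

lemma convL_single_one_apply (a : G) (f : G → ℂ) (u : G) :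
    convL G (single a 1) f u = f (a⁻¹ * u) := by
  simp [convL]

lemma convR_single_one_apply (a : G) (f : G → ℂ) (u : G) :
    convR G f (single a 1) u = f (u * a⁻¹) := by
  simp [convR]

lemma supNorm_single_one (a : G) : supNorm (single a (1 : ℂ)) = 1 := by
  classical
  have hcoeff (g : G) : ‖(single a (1 : ℂ)).coeff g‖ = if a = g then 1 else 0 := by
    rw [coeff_single, Finsupp.single_apply]
    split_ifs <;> simp
  refine le_antisymm (ciSup_le fun g => ?_) ?_
  · rw [hcoeff]
    split_ifs <;> norm_num
  · refine le_trans (by simp) (le_ciSup ⟨1, ?_⟩ a)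
    rintro _ ⟨g, rfl⟩
    simp only [hcoeff]
    split_ifs <;> norm_num

end Convolution

def IsConvDerivation (G : Type*) [Group G] (d : MonoidAlgebra ℂ G → G → ℂ) : Prop :=
  ∀ x y : MonoidAlgebra ℂ G, d (x * y) = convR G (d x) y + convL G x (d y)

namespace IsConvDerivation

variable {G : Type*} [Group G] {d : MonoidAlgebra ℂ G → G → ℂ}

lemma single_mul_apply (hd : IsConvDerivation G d) (a b u : G) :
    d (single (a * b) 1) u = d (single a 1) (u * b⁻¹) + d (single b 1) (a⁻¹ * u) := by
  have hsingle : single (a * b) (1 : ℂ) = single a 1 * single b 1 := by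
    rw [single_mul_single, one_mul]
  rw [hsingle, hd, Pi.add_apply, convR_single_one_apply, convL_single_one_apply]

lemma single_one_eq_zero (hd : IsConvDerivation G d) : d (single 1 1) = 0 := by
  funext u
  simpa using hd.single_mul_apply 1 1 u

lemma single_pow_apply_of_commute (hd : IsConvDerivation G d) {g t : G} (hgt : Commute g t)
    (n : ℕ) : d (single (t ^ n) 1) (g * t ^ n) = n * d (single t 1) (g * t) := by
  induction n with
  | zero => simp [hd.single_one_eq_zero]
  | succ n ih =>
    have hright : g * t ^ (n + 1) * t⁻¹ = g * t ^ n := by group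
    have hleft : (t ^ n)⁻¹ * (g * t ^ (n + 1)) = g * t := by
      rw [← mul_assoc, ((hgt.pow_right n).inv_right).symm.eq, pow_succ]
      group
    rw [pow_succ, hd.single_mul_apply, ← pow_succ, hright, hleft, ih]
    push_cast
    ring

end IsConvDerivation

lemma eq_zero_of_forall_natCast_mul_le {x K : ℝ} (hx : 0 ≤ x) (h : ∀ n : ℕ, n * x ≤ K) :
    x = 0 := by
  by_contra hne
  have hpos : 0 < x := lt_of_le_of_ne hx (Ne.symm hne)
  obtain ⟨n, hn⟩ := exists_nat_gt (K / x)
  linarith [h n, (div_lt_iff₀ hpos).mp hn]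

theorem derivation_into_subordinate_bimodule_quasiInner_general
    (G : Type*) [Group G] (A : Submodule ℂ (G → ℂ))
    (N : (G → ℂ) → ℝ)
    -- N is subordinate to the supremum norm
    (C : ℝ) (hC : 0 < C)
    (hsub : ∀ a ∈ A, ∀ u : G, ‖a u‖ ≤ C * N a)
    -- d is a derivation ℂ[G] → A
    (d : MonoidAlgebra ℂ G →ₗ[ℂ] (G → ℂ))
    (hrange : ∀ x : MonoidAlgebra ℂ G, d x ∈ A)
    (hder : ∀ x y : MonoidAlgebra ℂ G, d (x * y) = convR G (d x) y + convL G x (d y))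
    -- d is bounded from the supremum norm to N
    (M : ℝ) (hbdd : ∀ x : MonoidAlgebra ℂ G, N (d x) ≤ M * supNorm x) :
    ∀ g t : G, g * t = t * g → d (MonoidAlgebra.single t (1 : ℂ)) (g * t) = 0 := by
  intro g t hgt
  have hd : IsConvDerivation G d := hder
  have hbound (n : ℕ) : n * ‖d (single t 1) (g * t)‖ ≤ C * M := by
    have hN : N (d (single (t ^ n) 1)) ≤ M := by
      simpa [supNorm_single_one] using hbdd (single (t ^ n) 1)
    calc (n : ℝ) * ‖d (single t 1) (g * t)‖
        = ‖d (single (t ^ n) 1) (g * t ^ n)‖ := by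
          rw [hd.single_pow_apply_of_commute hgt, norm_mul, Complex.norm_natCast]
      _ ≤ C * N (d (single (t ^ n) 1)) := hsub _ (hrange _) _
      _ ≤ C * M := mul_le_mul_of_nonneg_left hN hC.le
  exact norm_eq_zero.mp (eq_zero_of_forall_natCast_mul_le (norm_nonneg _) hbound)

/-- If `A` is a sub-`ℂ[G]`-bimodule of the convolution bimodule of functions `G → ℂ`
consisting of bounded functions, `N` is a norm on `A` subordinate to the supremum norm
(`sup_u |a u| ≤ C * N a`), and `d : ℂ[G] → A` is a derivation bounded from the supremum
norm to `N`, then `d` is quasi-inner: `(d δ_t)(g*t) = 0` whenever `g*t = t*g`. -/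
theorem derivation_into_subordinate_bimodule_quasiInner
    (G : Type*) [Group G] (A : Submodule ℂ (G → ℂ))
    -- A is closed under the left and right ℂ[G]-actions (a sub-bimodule)
    (hAL : ∀ (x : MonoidAlgebra ℂ G) (a : G → ℂ), a ∈ A → convL G x a ∈ A)
    (hAR : ∀ (x : MonoidAlgebra ℂ G) (a : G → ℂ), a ∈ A → convR G a x ∈ A)
    -- every element of A is a bounded function (A ⊆ ℓ^∞(G))
    (hAbdd : ∀ a ∈ A, ∃ B : ℝ, ∀ u : G, ‖a u‖ ≤ B)
    -- N is a norm on A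
    (N : (G → ℂ) → ℝ)
    (hN_nonneg : ∀ a ∈ A, 0 ≤ N a)
    (hN_eq_zero : ∀ a ∈ A, (N a = 0 ↔ a = 0))
    (hN_add : ∀ a ∈ A, ∀ b ∈ A, N (a + b) ≤ N a + N b)
    (hN_smul : ∀ (c : ℂ), ∀ a ∈ A, N (c • a) = ‖c‖ * N a)
    -- N is subordinate to the supremum norm
    (C : ℝ) (hC : 0 < C)
    (hsub : ∀ a ∈ A, ∀ u : G, ‖a u‖ ≤ C * N a)
    -- d is a derivation ℂ[G] → A
    (d : MonoidAlgebra ℂ G →ₗ[ℂ] (G → ℂ))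
    (hrange : ∀ x : MonoidAlgebra ℂ G, d x ∈ A)
    (hder : ∀ x y : MonoidAlgebra ℂ G, d (x * y) = convR G (d x) y + convL G x (d y))
    -- d is bounded from the supremum norm to N
    (M : ℝ) (hbdd : ∀ x : MonoidAlgebra ℂ G, N (d x) ≤ M * supNorm x) :
    ∀ g t : G, g * t = t * g → d (MonoidAlgebra.single t (1 : ℂ)) (g * t) = 0 :=
  derivation_into_subordinate_bimodule_quasiInner_general G A N C hC hsub d hrange hder M hbdd
end

section
/- Let G be a group and let d : ℂ[G] → ℓ^∞(G) be a derivation (with respect to the convolution bimodule structure) which is bounded from the supremum norm on ℂ[G] to the supremum norm on ℓ^∞(G), i.e. there exists M such that sup_{u∈G} |(d x)(u)| ≤ M·‖x‖_s for all x ∈ ℂ[G]. Then d is quasi-inner: (d δ_t)(g·t) = 0 for all g, t ∈ G with g·t = t·g. -/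
/-!
For `g` commuting with `t`, the Leibniz rule applied to `δ_{t^(n+1)} = δ_{t^n} * δ_t` gives
`(d δ_{t^n})(g t^n) = n · (d δ_t)(g t)`, by induction on `n`. Since `‖δ_{t^n}‖_s = 1`, boundedness
gives `n · |(d δ_t)(g t)| ≤ M` for every `n`, which forces `(d δ_t)(g t) = 0`.
-/

open MonoidAlgebra

lemma nonpos_of_forall_natCast_mul_le {a M : ℝ} (h : ∀ n : ℕ, n * a ≤ M) : a ≤ 0 := by
  by_contra! ha
  obtain ⟨n, hn⟩ := exists_nat_gt (M / a)
  exact (h n).not_gt ((div_lt_iff₀ ha).mp hn)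

section

variable {G : Type*} [Group G]

lemma convL_single_apply (s : G) (r : ℂ) (f : G → ℂ) (u : G) :
    convL G (single s r) f u = r * f (s⁻¹ * u) := by
  classical
  rcases eq_or_ne r 0 with rfl | hr
  · simp [convL]
  · simp [convL, coeff_single, Finsupp.support_single s hr]

lemma convR_single_apply (f : G → ℂ) (s : G) (r : ℂ) (u : G) :
    convR G f (single s r) u = f (u * s⁻¹) * r := by
  classical
  rcases eq_or_ne r 0 with rfl | hr
  · simp [convR]
  · simp [convR, coeff_single, Finsupp.support_single s hr]

lemma supNorm_single (s : G) (r : ℂ) : supNorm (single s r) = ‖r‖ := by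
  classical
  have hle : ∀ u, ‖(single s r).coeff u‖ ≤ ‖r‖ := fun u => by
    rw [coeff_single, Finsupp.single_apply]
    split_ifs <;> simp
  refine le_antisymm (ciSup_le hle) ?_
  unfold supNorm
  simpa [coeff_single] using le_ciSup ⟨‖r‖, Set.forall_mem_range.mpr hle⟩ s

variable (d : MonoidAlgebra ℂ G →ₗ[ℂ] (G → ℂ))

lemma map_one_eq_zero_of_derivation
    (hder : ∀ x y : MonoidAlgebra ℂ G, d (x * y) = convR G (d x) y + convL G x (d y)) :
    d 1 = 0 := by
  have h := hder 1 1
  rw [mul_one, one_def] at h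
  have hself : d (single 1 1) = d (single 1 1) + d (single 1 1) := by
    conv_lhs => rw [h]
    ext u
    simp [convL_single_apply, convR_single_apply]
  rw [one_def]
  simpa using hself

lemma derivation_single_mul_single_apply
    (hder : ∀ x y : MonoidAlgebra ℂ G, d (x * y) = convR G (d x) y + convL G x (d y))
    (s t u : G) :
    d (single (s * t) 1) u = d (single s 1) (u * t⁻¹) + d (single t 1) (s⁻¹ * u) := by
  rw [← one_mul (1 : ℂ), ← single_mul_single, hder]
  simp [convL_single_apply, convR_single_apply]

lemma derivation_single_pow_apply
    (hder : ∀ x y : MonoidAlgebra ℂ G, d (x * y) = convR G (d x) y + convL G x (d y))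
    {g t : G} (hgt : Commute g t) (n : ℕ) :
    d (single (t ^ n) 1) (g * t ^ n) = n * d (single t 1) (g * t) := by
  induction n with
  | zero => simp [map_one_eq_zero_of_derivation d hder, ← one_def]
  | succ n ih =>
    have hshift : g * (t ^ n * t) * t⁻¹ = g * t ^ n := by group
    have hconj : (t ^ n)⁻¹ * (g * (t ^ n * t)) = g * t := by
      rw [← mul_assoc g, (hgt.pow_right n).eq]; group
    rw [pow_succ, derivation_single_mul_single_apply d hder, hshift, hconj, ih]
    push_cast
    ring

end

/-- Every derivation `d : ℂ[G] → ℓ^∞(G)` which is bounded from the supremum norm to the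
supremum norm is quasi-inner: `(d δ_t)(g*t) = 0` whenever `g*t = t*g`. -/
theorem derivation_into_linfty_quasiInner
    (G : Type*) [Group G]
    (d : MonoidAlgebra ℂ G →ₗ[ℂ] (G → ℂ))
    (hder : ∀ x y : MonoidAlgebra ℂ G, d (x * y) = convR G (d x) y + convL G x (d y))
    -- d is bounded from the supremum norm to the supremum norm (in particular each
    -- `d x` is a bounded function, i.e. lies in ℓ^∞(G))
    (M : ℝ) (hbdd : ∀ (x : MonoidAlgebra ℂ G) (u : G),
      ‖d x u‖ ≤ M * supNorm x) :
    ∀ g t : G, g * t = t * g → d (MonoidAlgebra.single t (1 : ℂ)) (g * t) = 0 := by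
  intro g t hgt
  have hgrowth : ∀ n : ℕ, n * ‖d (single t 1) (g * t)‖ ≤ M := fun n => by
    have h := hbdd (single (t ^ n) 1) (g * t ^ n)
    rwa [derivation_single_pow_apply d hder hgt, supNorm_single, norm_one, mul_one, norm_mul,
      Complex.norm_natCast] at h
  exact norm_le_zero_iff.mp (nonpos_of_forall_natCast_mul_le hgrowth)
end

section
/- Let G be a group and let d : ℂ[G] → (G → ℂ) be any derivation with values in the convolution bimodule of all functions G → ℂ. Then the function χ_d(u,v) = (d δ_v)(u) is a character of the action groupoid of G: for all u, v, u', v' ∈ G with v'⁻¹u' = u v⁻¹, one has χ_d(u'v, v'v) = χ_d(u',v') + χ_d(u,v). Equivalently, for all x, g, h ∈ G: χ_d(x, gh) = χ_d(x h⁻¹, g) + χ_d(g⁻¹ x, h). -/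
section

variable {G : Type*} [Group G]

theorem convL_single (g : G) (c : ℂ) (f : G → ℂ) (u : G) :
    convL G (MonoidAlgebra.single g c) f u = c * f (g⁻¹ * u) :=
  Finsupp.sum_single_index (h := fun g c => c * f (g⁻¹ * u)) (zero_mul _)

theorem convR_single (g : G) (c : ℂ) (f : G → ℂ) (u : G) :
    convR G f (MonoidAlgebra.single g c) u = f (u * g⁻¹) * c :=
  Finsupp.sum_single_index (h := fun g c => f (u * g⁻¹) * c) (mul_zero _)

end

/-- For any derivation `d : ℂ[G] → (G → ℂ)` into the convolution bimodule of all
functions, the function `χ_d(u,v) = (d δ_v)(u)` is a character of the action groupoid: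
`χ_d(x, g*h) = χ_d(x*h⁻¹, g) + χ_d(g⁻¹*x, h)` for all `x g h : G`. -/
theorem derivation_gives_groupoid_character
    (G : Type*) [Group G]
    (d : MonoidAlgebra ℂ G →ₗ[ℂ] (G → ℂ))
    (hder : ∀ x y : MonoidAlgebra ℂ G, d (x * y) = convR G (d x) y + convL G x (d y)) :
    ∀ x g h : G,
      d (MonoidAlgebra.single (g * h) (1 : ℂ)) x =
        d (MonoidAlgebra.single g (1 : ℂ)) (x * h⁻¹) +
          d (MonoidAlgebra.single h (1 : ℂ)) (g⁻¹ * x) := by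
  intro x g h
  have hsplit : MonoidAlgebra.single (g * h) (1 : ℂ) =
      MonoidAlgebra.single g 1 * MonoidAlgebra.single h 1 := by
    rw [MonoidAlgebra.single_mul_single, one_mul]
  rw [hsplit, hder, Pi.add_apply, convR_single, convL_single, mul_one, one_mul]
end

section
/- Let G be a group, let σ, τ : G → G be group homomorphisms, and let χ : G×G → ℂ satisfy the twisted character identity χ(x, gh) = χ(x·σ(h)⁻¹, g) + χ(τ(g)⁻¹·x, h) for all x, g, h ∈ G, together with χ(x, e) = 0 for all x ∈ G. If g, t ∈ G satisfy the twisted loop condition τ(t)·g = g·σ(t), then for every positive integer n, χ(g·σ(t)ⁿ, tⁿ) = n·χ(g·σ(t), t). -/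
/-- If `χ : G × G → ℂ` satisfies the twisted character identity for group homomorphisms
`σ, τ : G → G` and vanishes on neutral morphisms, and `(g*σ(t), t)` is a twisted loop
(`τ(t)*g = g*σ(t)`), then `χ(g*σ(t)ⁿ, tⁿ) = n * χ(g*σ(t), t)` for every positive `n`. -/
theorem twisted_character_on_power_of_loop
    (G : Type*) [Group G] (σ τ : G →* G) (χ : G × G → ℂ)
    -- the twisted character identity
    (hχ : ∀ x g h : G, χ (x, g * h) = χ (x * (σ h)⁻¹, g) + χ ((τ g)⁻¹ * x, h))
    -- χ vanishes on neutral morphisms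
    (hχe : ∀ x : G, χ (x, 1) = 0)
    (g t : G) (hloop : τ t * g = g * σ t) :
    ∀ n : ℕ, 0 < n → χ (g * (σ t) ^ n, t ^ n) = (n : ℂ) * χ (g * σ t, t) := by
  have hcomm : ∀ n : ℕ, (τ t) ^ n * g = g * (σ t) ^ n := by
    intro n
    induction n with
    | zero => simp
    | succ k ih =>
      rw [pow_succ, pow_succ, mul_assoc, hloop, ← mul_assoc, ih, mul_assoc]
  intro n hn
  induction n with
  | zero => exact absurd hn (by simp)
  | succ k ih =>
    rcases Nat.eq_zero_or_pos k with hk | hk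
    · subst hk; simp
    · have := hχ (g * (σ t) ^ (k + 1)) (t ^ k) t
      rw [← pow_succ] at this
      rw [this]
      have h1 : g * (σ t) ^ (k + 1) * (σ t)⁻¹ = g * (σ t) ^ k := by
        rw [pow_succ, ← mul_assoc]; group
      have h2 : (τ (t ^ k))⁻¹ * (g * (σ t) ^ (k + 1)) = g * σ t := by
        rw [map_pow]
        have : g * (σ t) ^ (k + 1) = (τ t) ^ k * (g * σ t) := by
          rw [pow_succ, ← mul_assoc, ← hcomm, mul_assoc]
        rw [this, ← mul_assoc, inv_mul_cancel, one_mul]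
      rw [h1, h2, ih hk]
      push_cast
      ring
end

section
/- Let G be a group generated by a finite set S, with word length |g| (the least n such that g is a product of n elements of S ∪ S⁻¹, with |e| = 0), let z be an element of the center of G, and let τ : G → ℂ be a homomorphism into the additive group of complex numbers. For α > 0 define the norm ‖x‖*_α = Σ_{g∈G} |x(g)|·e^{−α|g|} on ℂ[G]. Then for all sufficiently large α > 0, the central derivation d^τ_z (the linear map with d^τ_z(δ_g) = τ(g)·δ_{gz}) is bounded from the supremum norm to ‖·‖*_α: there exist α₀ > 0 and, for each α ≥ α₀, a constant M such that ‖d^τ_z(x)‖*_α ≤ M·‖x‖_s for all x ∈ ℂ[G]. -/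
/-- The word length of `g ∈ G` with respect to a generating set `S`: the least `n` such
that `g` is a product of `n` elements of `S ∪ S⁻¹` (with the identity having length 0). -/
noncomputable def wordLength {G : Type*} [Group G] (S : Finset G) (g : G) : ℕ :=
  sInf {n : ℕ | ∃ l : List G, l.length = n ∧ (∀ s ∈ l, s ∈ S ∨ s⁻¹ ∈ S) ∧ l.prod = g}

/-- The weighted norm `‖x‖*_α = Σ_g |x g| e^(-α |g|)` on the group ring `ℂ[G]`. -/
noncomputable def weightedNorm {G : Type*} [Group G] (S : Finset G) (α : ℝ)
    (x : MonoidAlgebra ℂ G) : ℝ :=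
  ∑ g ∈ x.coeff.support, ‖x.coeff g‖ * Real.exp (-α * (wordLength S g : ℝ))

open Finset Pointwise Real

lemma summable_pow_mul_nat_mul_exp {m α : ℝ} (hm : 0 ≤ m) (h : m * exp (-α) < 1) :
    Summable fun n : ℕ => m ^ n * (n * exp (-α * n)) := by
  have hr : ‖m * exp (-α)‖ < 1 := by rwa [norm_of_nonneg (by positivity)]
  refine (summable_pow_mul_geometric_of_norm_lt_one 1 hr).congr fun n => ?_
  rw [mul_comm (-α), exp_nat_mul, mul_pow, pow_one]
  ring

section

variable {G : Type*} [Group G] {S : Finset G}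

lemma wordLength_le_length {g : G} {l : List G} (hl : ∀ s ∈ l, s ∈ S ∨ s⁻¹ ∈ S)
    (hprod : l.prod = g) : wordLength S g ≤ l.length :=
  Nat.sInf_le ⟨l, rfl, hl, hprod⟩

lemma exists_list_length_eq_wordLength (hS : Subgroup.closure (S : Set G) = ⊤) (g : G) :
    ∃ l : List G, l.length = wordLength S g ∧ (∀ s ∈ l, s ∈ S ∨ s⁻¹ ∈ S) ∧ l.prod = g := by
  refine Nat.sInf_mem
    (s := {n | ∃ l : List G, l.length = n ∧ (∀ s ∈ l, s ∈ S ∨ s⁻¹ ∈ S) ∧ l.prod = g}) ?_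
  have hg : g ∈ (Subgroup.closure (S : Set G)).toSubmonoid := by rw [hS]; trivial
  rw [Subgroup.closure_toSubmonoid] at hg
  obtain ⟨l, hl, hprod⟩ := Submonoid.exists_list_of_mem_closure hg
  exact ⟨l.length, l, rfl, fun s hs => by simpa using hl s hs, hprod⟩

lemma wordLength_mul_le (hS : Subgroup.closure (S : Set G) = ⊤) (a b : G) :
    wordLength S (a * b) ≤ wordLength S a + wordLength S b := by
  obtain ⟨la, hlen_a, hgen_a, rfl⟩ := exists_list_length_eq_wordLength hS a
  obtain ⟨lb, hlen_b, hgen_b, rfl⟩ := exists_list_length_eq_wordLength hS b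
  rw [← hlen_a, ← hlen_b, ← List.length_append]
  exact wordLength_le_length (fun s hs => (List.mem_append.1 hs).elim (hgen_a s) (hgen_b s))
    List.prod_append

lemma exp_neg_mul_wordLength_le (hS : Subgroup.closure (S : Set G) = ⊤) {α : ℝ} (hα : 0 ≤ α)
    (a b : G) :
    exp (-α * wordLength S a) ≤ exp (α * wordLength S b) * exp (-α * wordLength S (a * b)) := by
  rw [← exp_add, exp_le_exp]
  have hlen : (wordLength S (a * b) : ℝ) ≤ wordLength S a + wordLength S b := by
    exact_mod_cast wordLength_mul_le hS a b
  nlinarith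

lemma norm_le_wordLength_mul_sum_norm {E : Type*} [SeminormedAddGroup E]
    (hS : Subgroup.closure (S : Set G) = ⊤) {f : G → E} (hf : ∀ a b, f (a * b) = f a + f b)
    (g : G) : ‖f g‖ ≤ wordLength S g * ∑ s ∈ S, ‖f s‖ := by
  have f_one : f 1 = 0 := by simpa using hf 1 1
  have norm_le_of_gen : ∀ s, s ∈ S ∨ s⁻¹ ∈ S → ‖f s‖ ≤ ∑ s ∈ S, ‖f s‖ := by
    rintro s (hs | hs)
    · exact single_le_sum (fun _ _ => norm_nonneg _) hs
    · have f_inv : f s⁻¹ = -f s :=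
        eq_neg_of_add_eq_zero_left (by rw [← hf, inv_mul_cancel, f_one])
      simpa [f_inv] using single_le_sum (fun t _ => norm_nonneg (f t)) hs
  have norm_prod_le : ∀ l : List G, (∀ s ∈ l, s ∈ S ∨ s⁻¹ ∈ S) →
      ‖f l.prod‖ ≤ l.length * ∑ s ∈ S, ‖f s‖ := by
    intro l
    induction l with
    | nil => simp [f_one]
    | cons a l ih =>
      intro hl
      rw [List.prod_cons, hf, List.length_cons, Nat.cast_succ, add_one_mul, add_comm]
      exact (norm_add_le _ _).trans (add_le_add (norm_le_of_gen a (hl a List.mem_cons_self))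
        (ih fun s hs => hl s (List.mem_cons_of_mem a hs)))
  obtain ⟨l, hlen, hgen, rfl⟩ := exists_list_length_eq_wordLength hS g
  rw [← hlen]
  exact norm_prod_le l hgen

section Growth

variable [DecidableEq G]

lemma card_filter_wordLength_eq_le (hS : Subgroup.closure (S : Set G) = ⊤) (F : Finset G)
    (n : ℕ) : #(F.filter fun g => wordLength S g = n) ≤ #(S ∪ S⁻¹) ^ n :=
  calc #(F.filter fun g => wordLength S g = n)
      ≤ #((Fintype.piFinset fun _ : Fin n => S ∪ S⁻¹).image fun w => (List.ofFn w).prod) := by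
        refine card_le_card fun g hg => ?_
        obtain ⟨l, hlen, hgen, rfl⟩ := exists_list_length_eq_wordLength hS g
        obtain rfl : l.length = n := hlen.trans (mem_filter.1 hg).2
        refine mem_image.2 ⟨l.get, Fintype.mem_piFinset.2 fun i => ?_, by rw [List.ofFn_get]⟩
        simpa [mem_inv'] using hgen _ (List.get_mem l i)
    _ ≤ #(Fintype.piFinset fun _ : Fin n => S ∪ S⁻¹) := card_image_le
    _ = #(S ∪ S⁻¹) ^ n := by simp

lemma sum_comp_wordLength_le (hS : Subgroup.closure (S : Set G) = ⊤) (F : Finset G)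
    {f : ℕ → ℝ} (hf : ∀ n, 0 ≤ f n) (hsum : Summable fun n => (#(S ∪ S⁻¹) : ℝ) ^ n * f n) :
    ∑ g ∈ F, f (wordLength S g) ≤ ∑' n, (#(S ∪ S⁻¹) : ℝ) ^ n * f n :=
  calc ∑ g ∈ F, f (wordLength S g)
      = ∑ n ∈ F.image (wordLength S), #(F.filter fun g => wordLength S g = n) • f n :=
        sum_comp f _
    _ ≤ ∑ n ∈ F.image (wordLength S), (#(S ∪ S⁻¹) : ℝ) ^ n * f n := by
        gcongr with n
        rw [nsmul_eq_mul]
        gcongr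
        · exact hf n
        · exact_mod_cast card_filter_wordLength_eq_le hS F n
    _ ≤ ∑' n, (#(S ∪ S⁻¹) : ℝ) ^ n * f n :=
        hsum.sum_le_tsum _ fun n _ => mul_nonneg (by positivity) (hf n)

end Growth

lemma norm_coeff_le_supNorm (x : MonoidAlgebra ℂ G) (g : G) : ‖x.coeff g‖ ≤ supNorm x := by
  have hbdd : BddAbove (Set.range fun g => ‖x.coeff g‖) := by
    refine (x.coeff.finite_range.image norm).bddAbove.mono ?_
    rintro _ ⟨g, rfl⟩
    exact ⟨_, ⟨g, rfl⟩, rfl⟩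
  exact le_ciSup hbdd g

lemma supNorm_nonneg (x : MonoidAlgebra ℂ G) : 0 ≤ supNorm x :=
  (norm_nonneg _).trans (norm_coeff_le_supNorm x 1)

lemma coeff_apply_of_map_single {τ : G → ℂ} {z : G}
    {d : MonoidAlgebra ℂ G →ₗ[ℂ] MonoidAlgebra ℂ G}
    (hd : ∀ g : G, d (MonoidAlgebra.single g 1) = τ g • MonoidAlgebra.single (g * z) 1)
    (x : MonoidAlgebra ℂ G) (h : G) : (d x).coeff h = τ (h * z⁻¹) * x.coeff (h * z⁻¹) := by
  classical
  induction x using MonoidAlgebra.induction_linear with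
  | zero => simp
  | add x y hx hy => simp [hx, hy, mul_add]
  | single g r =>
    rw [← mul_one r, ← smul_eq_mul, ← MonoidAlgebra.smul_single, map_smul, hd, smul_smul]
    simp only [MonoidAlgebra.coeff_smul_apply, MonoidAlgebra.coeff_single, Finsupp.single_apply,
      eq_mul_inv_iff_mul_eq, smul_eq_mul]
    split_ifs with hgz
    · rw [← hgz, mul_inv_cancel_right]
      ring
    · ring

lemma norm_coeff_map_mul_exp_le (hS : Subgroup.closure (S : Set G) = ⊤) {τ : G → ℂ}
    (hτ : ∀ g h : G, τ (g * h) = τ g + τ h) {z : G} {d : MonoidAlgebra ℂ G →ₗ[ℂ] MonoidAlgebra ℂ G}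
    (hd : ∀ g : G, d (MonoidAlgebra.single g 1) = τ g • MonoidAlgebra.single (g * z) 1)
    {α : ℝ} (hα : 0 ≤ α) (x : MonoidAlgebra ℂ G) (h : G) :
    ‖(d x).coeff h‖ * exp (-α * wordLength S h) ≤
      supNorm x * ((∑ s ∈ S, ‖τ s‖) * exp (α * wordLength S z⁻¹)) *
        (wordLength S (h * z⁻¹) * exp (-α * wordLength S (h * z⁻¹))) :=
  calc ‖(d x).coeff h‖ * exp (-α * wordLength S h)
      = ‖τ (h * z⁻¹)‖ * ‖x.coeff (h * z⁻¹)‖ * exp (-α * wordLength S h) := by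
        rw [coeff_apply_of_map_single hd, norm_mul]
    _ ≤ (wordLength S (h * z⁻¹) * ∑ s ∈ S, ‖τ s‖) * supNorm x *
          (exp (α * wordLength S z⁻¹) * exp (-α * wordLength S (h * z⁻¹))) := by
        have := supNorm_nonneg x
        gcongr
        · exact norm_le_wordLength_mul_sum_norm hS hτ _
        · exact norm_coeff_le_supNorm x _
        · exact exp_neg_mul_wordLength_le hS hα h z⁻¹
    _ = _ := by ring

end

theorem central_derivation_bounded_weighted_norm_general
    (G : Type*) [Group G] (S : Finset G) (hS : Subgroup.closure (S : Set G) = ⊤)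
    (z : G)
    (τ : G → ℂ) (hτ : ∀ g h : G, τ (g * h) = τ g + τ h)
    (d : MonoidAlgebra ℂ G →ₗ[ℂ] MonoidAlgebra ℂ G)
    (hd : ∀ g : G, d (MonoidAlgebra.single g (1 : ℂ)) =
      τ g • MonoidAlgebra.single (g * z) (1 : ℂ)) :
    ∃ α₀ : ℝ, 0 < α₀ ∧ ∀ α : ℝ, α₀ ≤ α →
      ∃ M : ℝ, ∀ x : MonoidAlgebra ℂ G, weightedNorm S α (d x) ≤ M * supNorm x := by
  classical
  set m := (#(S ∪ S⁻¹) : ℝ)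
  refine ⟨m + 1, by positivity, fun α hα => ?_⟩
  have hα0 : 0 ≤ α := le_trans (by positivity) hα
  have hr : m * exp (-α) < 1 := by
    rw [exp_neg, ← div_eq_mul_inv, div_lt_one (exp_pos α)]
    linarith [add_one_le_exp α]
  set A := (∑ s ∈ S, ‖τ s‖) * exp (α * wordLength S z⁻¹)
  let f : ℕ → ℝ := fun n => n * exp (-α * n)
  refine ⟨A * ∑' n, m ^ n * f n, fun x => ?_⟩
  calc weightedNorm S α (d x)
      ≤ ∑ h ∈ (d x).coeff.support, supNorm x * A * f (wordLength S (h * z⁻¹)) :=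
        sum_le_sum fun h _ => norm_coeff_map_mul_exp_le hS hτ hd hα0 x h
    _ = supNorm x * A * ∑ g ∈ (d x).coeff.support.image (· * z⁻¹), f (wordLength S g) := by
        rw [mul_sum, sum_image fun a _ b _ hab => mul_right_cancel hab]
    _ ≤ supNorm x * A * ∑' n, m ^ n * f n := by
        have := supNorm_nonneg x
        gcongr
        exact sum_comp_wordLength_le hS _ (fun n => by positivity)
          (summable_pow_mul_nat_mul_exp (by positivity) hr)
    _ = A * (∑' n, m ^ n * f n) * supNorm x := by ring

/-- Let `G` be generated by a finite set `S`, let `z` be central and `τ : G → (ℂ,+)` an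
additive homomorphism. For all sufficiently large `α > 0`, the central derivation `d`
(determined by `d(δ_g) = τ(g)•δ_{gz}`) is bounded from the supremum norm to the weighted
norm `‖·‖*_α`. -/
theorem central_derivation_bounded_weighted_norm
    (G : Type*) [Group G] (S : Finset G) (hS : Subgroup.closure (S : Set G) = ⊤)
    (z : G) (hz : z ∈ Subgroup.center G)
    (τ : G → ℂ) (hτ : ∀ g h : G, τ (g * h) = τ g + τ h)
    (d : MonoidAlgebra ℂ G →ₗ[ℂ] MonoidAlgebra ℂ G)
    (hd : ∀ g : G, d (MonoidAlgebra.single g (1 : ℂ)) =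
      τ g • MonoidAlgebra.single (g * z) (1 : ℂ)) :
    ∃ α₀ : ℝ, 0 < α₀ ∧ ∀ α : ℝ, α₀ ≤ α →
      ∃ M : ℝ, ∀ x : MonoidAlgebra ℂ G, weightedNorm S α (d x) ≤ M * supNorm x :=
  central_derivation_bounded_weighted_norm_general G S hS z τ hτ d hd
end
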